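/- arXiv:0805.0149 — 2 statements merged into one kernel-verified Lean document; each statement's English description precedes it below -/
import Mathlib

section
/- Let F be a real n×p matrix, let k ≥ 1 and let k₁,…,k_l be positive integers with k + k₁ + ⋯ + k_l ≤ p. Then θ_{k, k₁+⋯+k_l} ≤ √(δ_{k+k₁}² + ⋯ + δ_{k+k_l}²), where δ and θ are respectively the restricted isometry and restricted orthogonality constants of F. -/
/-- A vector `v ∈ ℝ^p` is `k`-sparse if it has at most `k` nonzero entries. -/
def IsSparse {p : ℕ} (k : ℕ) (v : Fin p → ℝ) : Prop :=
  ∃ s : Finset (Fin p), s.card ≤ k ∧ ∀ i ∉ s, v i = 0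

/-- The ℓ₂ norm of a vector in `ℝ^m`. -/
noncomputable def l2norm {m : ℕ} (v : Fin m → ℝ) : ℝ :=
  Real.sqrt (∑ i, v i ^ 2)

/-- The ℓ₁ norm of a vector in `ℝ^m`. -/
def l1norm {m : ℕ} (v : Fin m → ℝ) : ℝ := ∑ i, |v i|

/-- The `k`-restricted isometry constant `δ_k` of `F`: the smallest `δ` such that
`√(1-δ)‖c‖₂ ≤ ‖Fc‖₂ ≤ √(1+δ)‖c‖₂` for every `k`-sparse vector `c`. -/
noncomputable def ripConst {n p : ℕ} (F : Matrix (Fin n) (Fin p) ℝ) (k : ℕ) : ℝ :=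
  sInf {δ : ℝ | ∀ c : Fin p → ℝ, IsSparse k c →
    Real.sqrt (1 - δ) * l2norm c ≤ l2norm (F.mulVec c) ∧
    l2norm (F.mulVec c) ≤ Real.sqrt (1 + δ) * l2norm c}

/-- The `(k,k')`-restricted orthogonality constant `θ_{k,k'}` of `F`: the smallest `θ` such
that `|⟨Fc, Fc'⟩| ≤ θ‖c‖₂‖c'‖₂` for all `k`-sparse `c` and `k'`-sparse `c'` with disjoint
supports. -/
noncomputable def roConst {n p : ℕ} (F : Matrix (Fin n) (Fin p) ℝ) (k k' : ℕ) : ℝ :=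
  sInf {θ : ℝ | ∀ c c' : Fin p → ℝ, IsSparse k c → IsSparse k' c' →
    (∀ i, c i = 0 ∨ c' i = 0) →
    |∑ i, F.mulVec c i * F.mulVec c' i| ≤ θ * (l2norm c * l2norm c')}

/-!
Let `a = ‖c‖` and `b = ‖d‖` for orthogonal `c`, `d` of sparsity `k` and `k'`. The vectors
`b c ± a d` are `(k + k')`-sparse of equal norm, and the difference of their RIP bounds of order
`k + k'` polarizes to `|⟨Fc, Fd⟩| ≤ δ_{k+k'} ‖c‖ ‖d‖`. Split `c'` into pieces `c'_i` of sparsity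
`k_i` with disjoint supports (one piece at a time, by induction on `l`); summing these bounds for
`⟨Fc, Fc'_i⟩` and applying Cauchy–Schwarz to `∑ δ_{k+k_i} ‖c'_i‖`, where
`∑ ‖c'_i‖² = ‖c'‖²`, gives the claim.
-/

open Finset Matrix

section

variable {m n p : ℕ}

lemma l2norm_nonneg (v : Fin m → ℝ) : 0 ≤ l2norm v := Real.sqrt_nonneg _

lemma l2norm_sq (v : Fin m → ℝ) : l2norm v ^ 2 = ∑ i, v i ^ 2 :=
  Real.sq_sqrt (sum_nonneg fun i _ => sq_nonneg (v i))

lemma l2norm_sq_eq_dotProduct (v : Fin m → ℝ) : l2norm v ^ 2 = v ⬝ᵥ v := by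
  rw [l2norm_sq]
  simp only [dotProduct, sq]

lemma l2norm_eq_zero {v : Fin m → ℝ} : l2norm v = 0 ↔ v = 0 := by
  rw [← sq_eq_zero_iff, l2norm_sq_eq_dotProduct, dotProduct_self_eq_zero]

lemma dotProduct_eq_zero_of_disjoint {c d : Fin m → ℝ} (h : ∀ j, c j = 0 ∨ d j = 0) :
    c ⬝ᵥ d = 0 :=
  sum_eq_zero fun j _ => by rcases h j with h | h <;> simp [h]

lemma l2norm_add_sq {c d : Fin m → ℝ} (h : c ⬝ᵥ d = 0) :
    l2norm (c + d) ^ 2 = l2norm c ^ 2 + l2norm d ^ 2 := by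
  simp only [l2norm_sq_eq_dotProduct, add_dotProduct, dotProduct_add, dotProduct_comm d c, h]
  ring

lemma l2norm_mulVec_sq_le (F : Matrix (Fin n) (Fin p) ℝ) (c : Fin p → ℝ) :
    l2norm (F *ᵥ c) ^ 2 ≤ (∑ j, ∑ i, F j i ^ 2) * l2norm c ^ 2 := by
  rw [l2norm_sq, l2norm_sq, sum_mul]
  exact sum_le_sum fun j _ => sum_mul_sq_le_sq_mul_sq univ (F j) c

lemma piecewise_zero_add_piecewise_zero (s : Finset (Fin m)) (v : Fin m → ℝ) :
    s.piecewise v 0 + s.piecewise 0 v = v := by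
  ext j
  by_cases hj : j ∈ s <;> simp [hj]

lemma l2norm_piecewise_zero_sq_add (s : Finset (Fin m)) (v : Fin m → ℝ) :
    l2norm (s.piecewise v 0) ^ 2 + l2norm (s.piecewise 0 v) ^ 2 = l2norm v ^ 2 := by
  conv_rhs => rw [← piecewise_zero_add_piecewise_zero s v]
  rw [l2norm_add_sq (dotProduct_eq_zero_of_disjoint fun j => ?_)]
  by_cases hj : j ∈ s <;> simp [hj]

lemma mul_add_mul_le_sqrt_mul_sqrt (a b c d : ℝ) :
    a * b + c * d ≤ √(a ^ 2 + c ^ 2) * √(b ^ 2 + d ^ 2) := by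
  simpa [Fin.sum_univ_two] using Real.sum_mul_le_sqrt_mul_sqrt univ ![a, c] ![b, d]

lemma Real.sInf_le_of_mem_of_nonneg {s : Set ℝ} {a : ℝ} (ha : a ∈ s) (h0 : 0 ≤ a) :
    sInf s ≤ a := by
  by_cases hs : BddBelow s
  · exact csInf_le hs ha
  · rw [Real.sInf_of_not_bddBelow hs]
    exact h0

lemma Real.le_sInf_mul {s : Set ℝ} {x r : ℝ} (hs : s.Nonempty) (hr : 0 ≤ r)
    (h : ∀ δ ∈ s, x ≤ δ * r) : x ≤ sInf s * r := by
  rcases hr.eq_or_lt with rfl | hr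
  · obtain ⟨δ, hδ⟩ := hs
    simpa using h δ hδ
  · exact (div_le_iff₀ hr).1 (le_csInf hs fun δ hδ => (div_le_iff₀ hr).2 (h δ hδ))

namespace IsSparse

variable {k k' : ℕ} {u v : Fin p → ℝ}

lemma mono (h : k ≤ k') (hv : IsSparse k v) : IsSparse k' v :=
  let ⟨s, hs, hv⟩ := hv
  ⟨s, hs.trans h, hv⟩

lemma smul (a : ℝ) (hv : IsSparse k v) : IsSparse k (a • v) :=
  let ⟨s, hs, hv⟩ := hv
  ⟨s, hs, fun i hi => by simp [hv i hi]⟩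

lemma add (hu : IsSparse k u) (hv : IsSparse k' v) : IsSparse (k + k') (u + v) := by
  obtain ⟨s, hs, hu⟩ := hu
  obtain ⟨t, ht, hv⟩ := hv
  refine ⟨s ∪ t, (card_union_le s t).trans (add_le_add hs ht), fun i hi => ?_⟩
  rw [mem_union, not_or] at hi
  simp [hu i hi.1, hv i hi.2]

lemma eq_zero (hv : IsSparse 0 v) : v = 0 := by
  obtain ⟨s, hs, hv⟩ := hv
  rw [Nat.le_zero, card_eq_zero] at hs
  subst hs
  exact funext fun i => hv i (notMem_empty i)

lemma exists_split (hv : IsSparse (k + k') v) :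
    ∃ s : Finset (Fin p), IsSparse k (s.piecewise v 0) ∧ IsSparse k' (s.piecewise 0 v) := by
  obtain ⟨t, ht, hv⟩ := hv
  obtain ⟨s, hst, hs⟩ := exists_subset_card_eq (min_le_right k #t)
  refine ⟨s, ⟨s, hs.trans_le (min_le_left _ _), fun i hi => piecewise_eq_of_notMem _ _ _ hi⟩,
    ⟨t \ s, ?_, fun i hi => ?_⟩⟩
  · rw [card_sdiff_of_subset hst, hs]
    omega
  · by_cases his : i ∈ s
    · simp [his]
    · simp only [mem_sdiff, his, not_false_eq_true, and_true] at hi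
      simp [his, hv i hi]

end IsSparse

def ripSet (F : Matrix (Fin n) (Fin p) ℝ) (K : ℕ) : Set ℝ :=
  {δ | ∀ c : Fin p → ℝ, IsSparse K c →
    √(1 - δ) * l2norm c ≤ l2norm (F *ᵥ c) ∧ l2norm (F *ᵥ c) ≤ √(1 + δ) * l2norm c}

variable (F : Matrix (Fin n) (Fin p) ℝ)

lemma ripConst_eq_sInf (K : ℕ) : ripConst F K = sInf (ripSet F K) := rfl

lemma ripSet_nonempty (K : ℕ) : (ripSet F K).Nonempty := by
  set M := ∑ j, ∑ i, F j i ^ 2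
  have hM : 0 ≤ M := by positivity
  refine ⟨1 + M, fun c _ => ⟨?_, ?_⟩⟩
  · rw [Real.sqrt_eq_zero'.2 (by linarith), zero_mul]
    exact l2norm_nonneg _
  · rw [← Real.sqrt_sq (l2norm_nonneg (F *ᵥ c)), ← Real.sqrt_sq (l2norm_nonneg c),
      ← Real.sqrt_mul (by linarith)]
    refine Real.sqrt_le_sqrt ((l2norm_mulVec_sq_le F c).trans ?_)
    gcongr
    linarith

variable {F}

lemma sq_bounds_of_mem_ripSet {K : ℕ} {δ : ℝ} {w : Fin p → ℝ} (hδ : δ ∈ ripSet F K)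
    (hw : IsSparse K w) :
    (1 - δ) * l2norm w ^ 2 ≤ l2norm (F *ᵥ w) ^ 2 ∧
      l2norm (F *ᵥ w) ^ 2 ≤ (1 + δ) * l2norm w ^ 2 := by
  obtain ⟨hlo, hup⟩ := hδ w hw
  have hw0 := l2norm_nonneg w
  have hFw0 := l2norm_nonneg (F *ᵥ w)
  have hlo' : (1 - δ) * l2norm w ^ 2 ≤ l2norm (F *ᵥ w) ^ 2 := by
    rcases le_total (1 - δ) 0 with h | h
    · nlinarith
    · calc (1 - δ) * l2norm w ^ 2 = (√(1 - δ) * l2norm w) ^ 2 := by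
            rw [mul_pow, Real.sq_sqrt h]
        _ ≤ _ := pow_le_pow_left₀ (by positivity) hlo 2
  refine ⟨hlo', ?_⟩
  rcases le_total 0 (1 + δ) with h | h
  · calc l2norm (F *ᵥ w) ^ 2 ≤ (√(1 + δ) * l2norm w) ^ 2 := pow_le_pow_left₀ hFw0 hup 2
      _ = _ := by rw [mul_pow, Real.sq_sqrt h]
  · -- Here `√(1 + δ) = 0` forces `F w = 0`, and then the lower bound forces `w = 0`.
    rw [Real.sqrt_eq_zero'.2 h, zero_mul] at hup
    nlinarith

lemma abs_dotProduct_mulVec_le_of_mem_ripSet {K k k' : ℕ} {δ : ℝ} {c d : Fin p → ℝ}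
    (hδ : δ ∈ ripSet F K) (hK : k + k' ≤ K) (hc : IsSparse k c) (hd : IsSparse k' d)
    (hcd : c ⬝ᵥ d = 0) :
    |(F *ᵥ c) ⬝ᵥ (F *ᵥ d)| ≤ δ * (l2norm c * l2norm d) := by
  set a := l2norm c
  set b := l2norm d
  -- `b • c ± a • d` both have squared norm `2 a² b²`; polarizing their RIP bounds gives the claim
  obtain ⟨hplus_lo, hplus_up⟩ :=
    sq_bounds_of_mem_ripSet hδ (((hc.smul b).add (hd.smul a)).mono hK)
  obtain ⟨hminus_lo, hminus_up⟩ :=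
    sq_bounds_of_mem_ripSet hδ (((hc.smul b).add (hd.smul (-a))).mono hK)
  have hcc : c ⬝ᵥ c = a ^ 2 := (l2norm_sq_eq_dotProduct c).symm
  have hdd : d ⬝ᵥ d = b ^ 2 := (l2norm_sq_eq_dotProduct d).symm
  simp only [l2norm_sq_eq_dotProduct, mulVec_add, mulVec_smul, add_dotProduct, dotProduct_add,
    smul_dotProduct, dotProduct_smul, smul_eq_mul, dotProduct_comm d c,
    dotProduct_comm (F *ᵥ d) (F *ᵥ c), hcd, hcc, hdd] at hplus_lo hplus_up hminus_lo hminus_up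
  set x := (F *ᵥ c) ⬝ᵥ (F *ᵥ d)
  have hup : a * b * x ≤ a * b * (δ * (a * b)) := by linarith
  have hlo : a * b * -x ≤ a * b * (δ * (a * b)) := by linarith
  rcases (mul_nonneg (l2norm_nonneg c) (l2norm_nonneg d)).eq_or_lt with hab | hab
  · have hx : x = 0 := by
      rcases mul_eq_zero.1 hab.symm with h | h <;> simp [x, l2norm_eq_zero.1 h]
    have hab : a * b = 0 := hab.symm
    simp [hx, hab]
  · exact abs_le.2 ⟨neg_le.1 (le_of_mul_le_mul_left hlo hab), le_of_mul_le_mul_left hup hab⟩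

lemma abs_dotProduct_mulVec_le_ripConst {K k k' : ℕ} {c d : Fin p → ℝ} (hK : k + k' ≤ K)
    (hc : IsSparse k c) (hd : IsSparse k' d) (hcd : c ⬝ᵥ d = 0) :
    |(F *ᵥ c) ⬝ᵥ (F *ᵥ d)| ≤ ripConst F K * (l2norm c * l2norm d) := by
  rw [ripConst_eq_sInf]
  exact Real.le_sInf_mul (ripSet_nonempty F K) (mul_nonneg (l2norm_nonneg c) (l2norm_nonneg d))
    fun _ hδ => abs_dotProduct_mulVec_le_of_mem_ripSet hδ hK hc hd hcd

theorem abs_dotProduct_mulVec_le_sqrt_sum_sq_ripConst {k : ℕ} {c : Fin p → ℝ}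
    (hc : IsSparse k c) {l : ℕ} (ks : Fin l → ℕ) {c' : Fin p → ℝ}
    (hc' : IsSparse (∑ i, ks i) c') (hcc' : ∀ j, c j = 0 ∨ c' j = 0) :
    |(F *ᵥ c) ⬝ᵥ (F *ᵥ c')| ≤
      √(∑ i, ripConst F (k + ks i) ^ 2) * (l2norm c * l2norm c') := by
  induction l generalizing c' with
  | zero => simp [(by simpa using hc' : IsSparse 0 c').eq_zero]
  | succ l ih =>
    rw [Fin.sum_univ_succ] at hc' ⊢
    obtain ⟨s, hc'₀, hc'₁⟩ := hc'.exists_split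
    set c'₀ := s.piecewise c' 0
    set c'₁ := s.piecewise 0 c'
    have hsum : c'₀ + c'₁ = c' := piecewise_zero_add_piecewise_zero s c'
    have hdisj₀ : ∀ j, c j = 0 ∨ c'₀ j = 0 := fun j =>
      (hcc' j).imp_right fun h => by by_cases hj : j ∈ s <;> simp [c'₀, hj, h]
    have hdisj₁ : ∀ j, c j = 0 ∨ c'₁ j = 0 := fun j =>
      (hcc' j).imp_right fun h => by by_cases hj : j ∈ s <;> simp [c'₁, hj, h]
    set δ := ripConst F (k + ks 0)
    set D := √(∑ i : Fin l, ripConst F (k + ks i.succ) ^ 2)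
    have h₀ : |(F *ᵥ c) ⬝ᵥ (F *ᵥ c'₀)| ≤ δ * (l2norm c * l2norm c'₀) :=
      abs_dotProduct_mulVec_le_ripConst le_rfl hc hc'₀ (dotProduct_eq_zero_of_disjoint hdisj₀)
    have h₁ : |(F *ᵥ c) ⬝ᵥ (F *ᵥ c'₁)| ≤ D * (l2norm c * l2norm c'₁) := ih _ hc'₁ hdisj₁
    have hCS : δ * l2norm c'₀ + D * l2norm c'₁ ≤ √(δ ^ 2 + D ^ 2) * l2norm c' := by
      have := mul_add_mul_le_sqrt_mul_sqrt δ (l2norm c'₀) D (l2norm c'₁)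
      rwa [l2norm_piecewise_zero_sq_add, Real.sqrt_sq (l2norm_nonneg c')] at this
    calc |(F *ᵥ c) ⬝ᵥ (F *ᵥ c')|
        = |(F *ᵥ c) ⬝ᵥ (F *ᵥ c'₀) + (F *ᵥ c) ⬝ᵥ (F *ᵥ c'₁)| := by
          rw [← dotProduct_add, ← mulVec_add, hsum]
      _ ≤ δ * (l2norm c * l2norm c'₀) + D * (l2norm c * l2norm c'₁) :=
          (abs_add_le _ _).trans (add_le_add h₀ h₁)
      _ = l2norm c * (δ * l2norm c'₀ + D * l2norm c'₁) := by ring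
      _ ≤ l2norm c * (√(δ ^ 2 + D ^ 2) * l2norm c') :=
          mul_le_mul_of_nonneg_left hCS (l2norm_nonneg c)
      _ = _ := by
          rw [Real.sq_sqrt (by positivity)]
          ring

end

theorem roConst_le_sqrt_sum_ripConst_general {n p : ℕ} (F : Matrix (Fin n) (Fin p) ℝ)
    (k : ℕ) (l : ℕ) (ks : Fin l → ℕ) :
    roConst F k (∑ i, ks i) ≤ Real.sqrt (∑ i, (ripConst F (k + ks i)) ^ 2) :=
  Real.sInf_le_of_mem_of_nonneg
    (fun _ _ hc hc' hcc' => abs_dotProduct_mulVec_le_sqrt_sum_sq_ripConst hc ks hc' hcc')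
    (Real.sqrt_nonneg _)

/-- For positive integers `k, k₁, …, k_l` with `k + k₁ + ⋯ + k_l ≤ p`,
`θ_{k, k₁+⋯+k_l} ≤ √(δ_{k+k₁}² + ⋯ + δ_{k+k_l}²)`. -/
theorem roConst_le_sqrt_sum_ripConst {n p : ℕ} (F : Matrix (Fin n) (Fin p) ℝ)
    (k : ℕ) (hk : 1 ≤ k) (l : ℕ) (ks : Fin l → ℕ) (hks : ∀ i, 1 ≤ ks i)
    (hsum : k + ∑ i, ks i ≤ p) :
    roConst F k (∑ i, ks i) ≤ Real.sqrt (∑ i, (ripConst F (k + ks i)) ^ 2) :=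
  roConst_le_sqrt_sum_ripConst_general F k l ks
end

section
/- Let F be a real n×p matrix and let k ≥ 1 be an integer with 3k ≤ p. Then θ_{k,2k} ≤ √2 · δ_{2k}. Consequently, if δ_{2k} < √2 − 1, then δ_{2k} + θ_{k,2k} < 1. -/
section Aux

variable {n p : ℕ}

def RIPSet (F : Matrix (Fin n) (Fin p) ℝ) (k : ℕ) : Set ℝ :=
  {δ : ℝ | ∀ c : Fin p → ℝ, IsSparse k c →
    Real.sqrt (1 - δ) * l2norm c ≤ l2norm (F.mulVec c) ∧
    l2norm (F.mulVec c) ≤ Real.sqrt (1 + δ) * l2norm c}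

lemma ripConst_eq (F : Matrix (Fin n) (Fin p) ℝ) (k : ℕ) :
    ripConst F k = sInf (RIPSet F k) := rfl

lemma l2_sq {m : ℕ} (v : Fin m → ℝ) : l2norm v ^ 2 = ∑ i, v i ^ 2 :=
  Real.sq_sqrt (Finset.sum_nonneg fun i _ => sq_nonneg _)

lemma l2_nonneg {m : ℕ} (v : Fin m → ℝ) : 0 ≤ l2norm v := Real.sqrt_nonneg _

lemma l2_basis (i0 : Fin p) : l2norm (fun i => if i = i0 then (1:ℝ) else 0) = 1 := by
  unfold l2norm
  rw [show ∑ i, (if i = i0 then (1:ℝ) else 0)^2 = 1 by simp, Real.sqrt_one]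

lemma sparse_basis (i0 : Fin p) {k : ℕ} (hk : 1 ≤ k) :
    IsSparse k (fun i => if i = i0 then (1:ℝ) else 0) :=
  ⟨{i0}, by simpa using hk, fun i hi => by simp at hi; simp [hi]⟩

/-- Every member of the RIP set is nonnegative (when a basis vector exists). -/
lemma RIPSet_nonneg (F : Matrix (Fin n) (Fin p) ℝ) {k : ℕ} (hk : 1 ≤ k) (hp : 1 ≤ p)
    {δ : ℝ} (hδ : δ ∈ RIPSet F k) : 0 ≤ δ := by
  have i0 : Fin p := ⟨0, by omega⟩
  obtain ⟨h1, h2⟩ := hδ _ (sparse_basis i0 hk)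
  simp only [l2_basis, mul_one] at h1 h2
  have hle : Real.sqrt (1 - δ) ≤ Real.sqrt (1 + δ) := le_trans h1 h2
  by_contra hneg
  push_neg at hneg
  rcases le_or_gt 0 (1 + δ) with h | h
  · have := Real.sqrt_lt_sqrt h (by linarith : 1 + δ < 1 - δ)
    linarith
  · have hz : Real.sqrt (1 + δ) = 0 := Real.sqrt_eq_zero_of_nonpos (by linarith)
    have hpos : 0 < Real.sqrt (1 - δ) := Real.sqrt_pos.2 (by linarith)
    rw [hz] at hle
    linarith

lemma RIPSet_nonempty (F : Matrix (Fin n) (Fin p) ℝ) (k : ℕ) :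
    (RIPSet F k).Nonempty := by
  refine ⟨1 + ∑ i, ∑ j, F i j ^ 2, fun c _ => ?_⟩
  set M := ∑ i, ∑ j, F i j ^ 2 with hM
  have hM0 : 0 ≤ M := Finset.sum_nonneg fun i _ => Finset.sum_nonneg fun j _ => sq_nonneg _
  constructor
  · rw [Real.sqrt_eq_zero_of_nonpos (by linarith), zero_mul]
    exact l2_nonneg _
  · have hbound : ∑ i, F.mulVec c i ^ 2 ≤ M * ∑ j, c j ^ 2 := by
      rw [hM, Finset.sum_mul]
      refine Finset.sum_le_sum fun i _ => ?_
      have hmv : F.mulVec c i = ∑ j, F i j * c j := rfl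
      rw [hmv]
      exact Finset.sum_mul_sq_le_sq_mul_sq Finset.univ (F i) c
    have h2 : ∑ i, F.mulVec c i ^ 2 ≤ (1 + (1 + M)) * ∑ j, c j ^ 2 := by
      have : 0 ≤ ∑ j, c j ^ 2 := Finset.sum_nonneg fun j _ => sq_nonneg _
      nlinarith
    calc l2norm (F.mulVec c) = Real.sqrt (∑ i, F.mulVec c i ^ 2) := rfl
      _ ≤ Real.sqrt ((1 + (1 + M)) * ∑ j, c j ^ 2) := Real.sqrt_le_sqrt h2
      _ = Real.sqrt (1 + (1 + M)) * l2norm c := Real.sqrt_mul (by linarith) _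

lemma RIPSet_bddBelow (F : Matrix (Fin n) (Fin p) ℝ) {k : ℕ} (hk : 1 ≤ k) (hp : 1 ≤ p) :
    BddBelow (RIPSet F k) :=
  ⟨0, fun δ hδ => RIPSet_nonneg F hk hp hδ⟩

lemma RIPSet_closed (F : Matrix (Fin n) (Fin p) ℝ) (k : ℕ) :
    IsClosed (RIPSet F k) := by
  have : RIPSet F k = ⋂ (c : Fin p → ℝ) (_ : IsSparse k c),
      ({δ : ℝ | Real.sqrt (1 - δ) * l2norm c ≤ l2norm (F.mulVec c)} ∩
       {δ : ℝ | l2norm (F.mulVec c) ≤ Real.sqrt (1 + δ) * l2norm c}) := by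
    ext δ
    simp only [RIPSet, Set.mem_setOf_eq, Set.mem_iInter, Set.mem_inter_iff]
  rw [this]
  refine isClosed_iInter fun c => isClosed_iInter fun _ => IsClosed.inter ?_ ?_
  · exact isClosed_le (((Real.continuous_sqrt.comp
      (continuous_const.sub continuous_id)).mul continuous_const)) continuous_const
  · exact isClosed_le continuous_const ((Real.continuous_sqrt.comp
      (continuous_const.add continuous_id)).mul continuous_const)

lemma ripConst_mem (F : Matrix (Fin n) (Fin p) ℝ) {k : ℕ} (hk : 1 ≤ k) (hp : 1 ≤ p) :
    ripConst F k ∈ RIPSet F k := by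
  rw [ripConst_eq]
  exact (RIPSet_closed F k).csInf_mem (RIPSet_nonempty F k) (RIPSet_bddBelow F hk hp)

/-- Polarization bound for disjoint k-sparse vectors, unscaled form. -/
lemma polar {k : ℕ} (F : Matrix (Fin n) (Fin p) ℝ) {δ : ℝ}
    (hδ : δ ∈ RIPSet F (2 * k)) (hδ0 : 0 ≤ δ) (x y : Fin p → ℝ)
    (hx : IsSparse k x) (hy : IsSparse k y) (hd : ∀ i, x i = 0 ∨ y i = 0) :
    |∑ i, F.mulVec x i * F.mulVec y i| ≤ (δ / 2) * ((∑ i, x i ^ 2) + ∑ i, y i ^ 2) := by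
  obtain ⟨sx, hsx, hx0⟩ := hx
  obtain ⟨sy, hsy, hy0⟩ := hy
  have hcard : (sx ∪ sy).card ≤ 2 * k := by
    have := Finset.card_union_le sx sy; omega
  have hsp : IsSparse (2 * k) (x + y) := ⟨sx ∪ sy, hcard, fun i hi => by
    simp only [Finset.mem_union, not_or] at hi
    simp [Pi.add_apply, hx0 i hi.1, hy0 i hi.2]⟩
  have hsm : IsSparse (2 * k) (x - y) := ⟨sx ∪ sy, hcard, fun i hi => by
    simp only [Finset.mem_union, not_or] at hi
    simp [Pi.sub_apply, hx0 i hi.1, hy0 i hi.2]⟩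
  set S : ℝ := (∑ i, x i ^ 2) + ∑ i, y i ^ 2 with hS
  have hS0 : 0 ≤ S := by
    have h1 : 0 ≤ ∑ i, x i ^ 2 := Finset.sum_nonneg fun i _ => sq_nonneg _
    have h2 : 0 ≤ ∑ i, y i ^ 2 := Finset.sum_nonneg fun i _ => sq_nonneg _
    linarith
  have hplus : l2norm (x + y) ^ 2 = S := by
    rw [l2_sq, hS, ← Finset.sum_add_distrib]
    refine Finset.sum_congr rfl fun i _ => ?_
    rcases hd i with h | h <;> simp [Pi.add_apply, h] <;> ring
  have hminus : l2norm (x - y) ^ 2 = S := by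
    rw [l2_sq, hS, ← Finset.sum_add_distrib]
    refine Finset.sum_congr rfl fun i _ => ?_
    rcases hd i with h | h <;> simp [Pi.sub_apply, h] <;> ring
  obtain ⟨hp1, hp2⟩ := hδ _ hsp
  obtain ⟨hm1, hm2⟩ := hδ _ hsm
  have upper : ∀ v : Fin p → ℝ, l2norm v ^ 2 = S →
      l2norm (F.mulVec v) ≤ Real.sqrt (1 + δ) * l2norm v →
      l2norm (F.mulVec v) ^ 2 ≤ (1 + δ) * S := fun v hv h => by
    calc l2norm (F.mulVec v) ^ 2 ≤ (Real.sqrt (1 + δ) * l2norm v) ^ 2 :=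
          pow_le_pow_left₀ (l2_nonneg _) h 2
      _ = (1 + δ) * S := by rw [mul_pow, Real.sq_sqrt (by linarith), hv]
  have lower : ∀ v : Fin p → ℝ, l2norm v ^ 2 = S →
      Real.sqrt (1 - δ) * l2norm v ≤ l2norm (F.mulVec v) →
      (1 - δ) * S ≤ l2norm (F.mulVec v) ^ 2 := fun v hv h => by
    rcases le_or_gt 0 (1 - δ) with h0 | h0
    · calc (1 - δ) * S = (Real.sqrt (1 - δ) * l2norm v) ^ 2 := by
            rw [mul_pow, Real.sq_sqrt h0, hv]
        _ ≤ l2norm (F.mulVec v) ^ 2 :=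
            pow_le_pow_left₀ (mul_nonneg (Real.sqrt_nonneg _) (l2_nonneg _)) h 2
    · nlinarith [sq_nonneg (l2norm (F.mulVec v))]
  have hAu := upper _ hplus hp2
  have hAl := lower _ hplus hp1
  have hBu := upper _ hminus hm2
  have hBl := lower _ hminus hm1
  have hexp : l2norm (F.mulVec (x + y)) ^ 2 - l2norm (F.mulVec (x - y)) ^ 2 =
      4 * ∑ i, F.mulVec x i * F.mulVec y i := by
    rw [l2_sq, l2_sq, Matrix.mulVec_add, Matrix.mulVec_sub, ← Finset.sum_sub_distrib,
      Finset.mul_sum]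
    refine Finset.sum_congr rfl fun i _ => ?_
    simp only [Pi.add_apply, Pi.sub_apply]
    ring
  rw [abs_le]
  constructor <;> nlinarith

/-- Polarization bound, scaled form: `|⟨Fx,Fy⟩| ≤ δ ‖x‖ ‖y‖`. -/
lemma polar' {k : ℕ} (F : Matrix (Fin n) (Fin p) ℝ) {δ : ℝ}
    (hδ : δ ∈ RIPSet F (2 * k)) (hδ0 : 0 ≤ δ) (x y : Fin p → ℝ)
    (hx : IsSparse k x) (hy : IsSparse k y) (hd : ∀ i, x i = 0 ∨ y i = 0) :
    |∑ i, F.mulVec x i * F.mulVec y i| ≤ δ * (l2norm x * l2norm y) := by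
  set a := l2norm x with ha
  set b := l2norm y with hb
  have ha0 : 0 ≤ a := l2_nonneg x
  have hb0 : 0 ≤ b := l2_nonneg y
  rcases eq_or_lt_of_le ha0 with h | hapos
  · -- a = 0 so x = 0
    have hx0 : ∀ i, x i = 0 := by
      intro i
      have hsum : ∑ j, x j ^ 2 = 0 := by
        have := l2_sq x; rw [← ha, ← h] at this; simpa using this.symm
      have := (Finset.sum_eq_zero_iff_of_nonneg (fun j _ => sq_nonneg (x j))).1 hsum i
        (Finset.mem_univ i)
      exact pow_eq_zero_iff (by norm_num) |>.1 this
    have : ∀ i, F.mulVec x i = 0 := fun i => by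
      simp [Matrix.mulVec, dotProduct, hx0]
    rw [show (∑ i, F.mulVec x i * F.mulVec y i) = 0 from
      Finset.sum_eq_zero fun i _ => by rw [this i, zero_mul]]
    simp [← h]
  rcases eq_or_lt_of_le hb0 with h | hbpos
  · have hy0 : ∀ i, y i = 0 := by
      intro i
      have hsum : ∑ j, y j ^ 2 = 0 := by
        have := l2_sq y; rw [← hb, ← h] at this; simpa using this.symm
      have := (Finset.sum_eq_zero_iff_of_nonneg (fun j _ => sq_nonneg (y j))).1 hsum i
        (Finset.mem_univ i)
      exact pow_eq_zero_iff (by norm_num) |>.1 this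
    have : ∀ i, F.mulVec y i = 0 := fun i => by
      simp [Matrix.mulVec, dotProduct, hy0]
    rw [show (∑ i, F.mulVec x i * F.mulVec y i) = 0 from
      Finset.sum_eq_zero fun i _ => by rw [this i, mul_zero]]
    simp [← h]
  -- both positive: apply polar to scaled vectors
  obtain ⟨sx, hsx, hx0⟩ := hx
  obtain ⟨sy, hsy, hy0⟩ := hy
  set x' : Fin p → ℝ := fun i => b * x i with hx'
  set y' : Fin p → ℝ := fun i => a * y i with hy'
  have hx's : IsSparse k x' := ⟨sx, hsx, fun i hi => by simp [hx', hx0 i hi]⟩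
  have hy's : IsSparse k y' := ⟨sy, hsy, fun i hi => by simp [hy', hy0 i hi]⟩
  have hd' : ∀ i, x' i = 0 ∨ y' i = 0 := fun i => by
    rcases hd i with h | h
    · exact Or.inl (by simp [hx', h])
    · exact Or.inr (by simp [hy', h])
  have hmvx : ∀ i, F.mulVec x' i = b * F.mulVec x i := fun i => by
    simp only [hx', Matrix.mulVec, dotProduct, Finset.mul_sum]
    exact Finset.sum_congr rfl fun j _ => by ring
  have hmvy : ∀ i, F.mulVec y' i = a * F.mulVec y i := fun i => by
    simp only [hy', Matrix.mulVec, dotProduct, Finset.mul_sum]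
    exact Finset.sum_congr rfl fun j _ => by ring
  have key := polar F hδ hδ0 x' y' hx's hy's hd'
  have hsx2 : ∑ i, x' i ^ 2 = b ^ 2 * a ^ 2 := by
    rw [show (b:ℝ)^2 * a^2 = b^2 * ∑ i, x i ^2 by rw [← l2_sq x, ← ha],
      Finset.mul_sum]
    exact Finset.sum_congr rfl fun i _ => by simp [hx']; ring
  have hsy2 : ∑ i, y' i ^ 2 = a ^ 2 * b ^ 2 := by
    rw [show (a:ℝ)^2 * b^2 = a^2 * ∑ i, y i ^2 by rw [← l2_sq y, ← hb],
      Finset.mul_sum]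
    exact Finset.sum_congr rfl fun i _ => by simp [hy']; ring
  have hinner : ∑ i, F.mulVec x' i * F.mulVec y' i =
      (a * b) * ∑ i, F.mulVec x i * F.mulVec y i := by
    rw [Finset.mul_sum]
    exact Finset.sum_congr rfl fun i _ => by rw [hmvx i, hmvy i]; ring
  rw [hinner, hsx2, hsy2, abs_mul, abs_of_pos (mul_pos hapos hbpos)] at key
  nlinarith [key, mul_pos hapos hbpos, abs_nonneg (∑ i, F.mulVec x i * F.mulVec y i)]

/-- The key estimate: `√2 δ` works as a restricted orthogonality constant. -/
lemma key_estimate {k : ℕ} (F : Matrix (Fin n) (Fin p) ℝ) {δ : ℝ}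
    (hδ : δ ∈ RIPSet F (2 * k)) (hδ0 : 0 ≤ δ) :
    ∀ c c' : Fin p → ℝ, IsSparse k c → IsSparse (2 * k) c' →
    (∀ i, c i = 0 ∨ c' i = 0) →
    |∑ i, F.mulVec c i * F.mulVec c' i| ≤
      (Real.sqrt 2 * δ) * (l2norm c * l2norm c') := by
  intro c c' hc hc' hd
  obtain ⟨s, hs, hs0⟩ := hc'
  obtain ⟨t1, ht1sub, ht1card⟩ := Finset.exists_subset_card_eq
    (min_le_left s.card k)
  set t2 : Finset (Fin p) := s \ t1 with ht2
  have ht1k : t1.card ≤ k := by rw [ht1card]; exact min_le_right _ _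
  have ht2k : t2.card ≤ k := by
    rw [ht2, Finset.card_sdiff_of_subset ht1sub, ht1card]
    omega
  set y1 : Fin p → ℝ := fun i => if i ∈ t1 then c' i else 0 with hy1
  set y2 : Fin p → ℝ := fun i => if i ∈ t2 then c' i else 0 with hy2
  have hy1s : IsSparse k y1 := ⟨t1, ht1k, fun i hi => by simp [hy1, hi]⟩
  have hy2s : IsSparse k y2 := ⟨t2, ht2k, fun i hi => by simp [hy2, hi]⟩
  have hd1 : ∀ i, c i = 0 ∨ y1 i = 0 := fun i => by
    rcases hd i with h | h
    · exact Or.inl h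
    · exact Or.inr (by simp [hy1, h])
  have hd2 : ∀ i, c i = 0 ∨ y2 i = 0 := fun i => by
    rcases hd i with h | h
    · exact Or.inl h
    · exact Or.inr (by simp [hy2, h])
  have hsplit : ∀ i, c' i = y1 i + y2 i := fun i => by
    by_cases h1 : i ∈ t1
    · have h2 : i ∉ t2 := by simp [ht2, h1]
      simp [hy1, hy2, h1, h2]
    · by_cases hs' : i ∈ s
      · have h2 : i ∈ t2 := by simp [ht2, hs', h1]
        simp [hy1, hy2, h1, h2]
      · have h2 : i ∉ t2 := fun hmem => hs' (Finset.mem_sdiff.1 hmem).1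
        simp [hy1, hy2, h1, h2, hs0 i hs']
  have hsq : ∀ i, c' i ^ 2 = y1 i ^ 2 + y2 i ^ 2 := fun i => by
    by_cases h1 : i ∈ t1
    · have h2 : i ∉ t2 := by simp [ht2, h1]
      simp [hy1, hy2, h1, h2]
    · by_cases hs' : i ∈ s
      · have h2 : i ∈ t2 := by simp [ht2, hs', h1]
        simp [hy1, hy2, h1, h2]
      · have h2 : i ∉ t2 := fun hmem => hs' (Finset.mem_sdiff.1 hmem).1
        simp [hy1, hy2, h1, h2, hs0 i hs']
  have hnormsq : l2norm y1 ^ 2 + l2norm y2 ^ 2 = l2norm c' ^ 2 := by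
    rw [l2_sq, l2_sq, l2_sq, ← Finset.sum_add_distrib]
    exact (Finset.sum_congr rfl fun i _ => (hsq i)).symm
  have hinner : ∑ i, F.mulVec c i * F.mulVec c' i =
      (∑ i, F.mulVec c i * F.mulVec y1 i) + ∑ i, F.mulVec c i * F.mulVec y2 i := by
    have hc'eq : c' = y1 + y2 := funext fun i => by rw [hsplit i]; rfl
    rw [hc'eq, Matrix.mulVec_add, ← Finset.sum_add_distrib]
    exact Finset.sum_congr rfl fun i _ => by simp [Pi.add_apply]; ring
  have h1 := polar' F hδ hδ0 c y1 hc hy1s hd1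
  have h2 := polar' F hδ hδ0 c y2 hc hy2s hd2
  set a := l2norm y1 with hay1
  set b := l2norm y2 with hby2
  set r := l2norm c' with hrc'
  have ha0 : 0 ≤ a := l2_nonneg _
  have hb0 : 0 ≤ b := l2_nonneg _
  have hr0 : 0 ≤ r := l2_nonneg _
  have habr : a + b ≤ Real.sqrt 2 * r := by
    have hsq2 : (a + b) ^ 2 ≤ (Real.sqrt 2 * r) ^ 2 := by
      rw [mul_pow, Real.sq_sqrt (by norm_num : (0:ℝ) ≤ 2)]
      nlinarith [sq_nonneg (a - b)]
    nlinarith [Real.sqrt_nonneg 2, mul_nonneg (Real.sqrt_nonneg 2) hr0]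
  calc |∑ i, F.mulVec c i * F.mulVec c' i|
      ≤ |∑ i, F.mulVec c i * F.mulVec y1 i| + |∑ i, F.mulVec c i * F.mulVec y2 i| := by
        rw [hinner]; exact abs_add_le _ _
    _ ≤ δ * (l2norm c * a) + δ * (l2norm c * b) := add_le_add h1 h2
    _ = (δ * l2norm c) * (a + b) := by ring
    _ ≤ (δ * l2norm c) * (Real.sqrt 2 * r) := by
        exact mul_le_mul_of_nonneg_left habr (mul_nonneg hδ0 (l2_nonneg c))
    _ = (Real.sqrt 2 * δ) * (l2norm c * r) := by ring

end Aux

/-- `θ_{k,2k} ≤ √2 · δ_{2k}`; consequently `δ_{2k} < √2 - 1` implies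
`δ_{2k} + θ_{k,2k} < 1`. -/
theorem roConst_le_sqrt_two_ripConst {n p : ℕ} (F : Matrix (Fin n) (Fin p) ℝ)
    (k : ℕ) (hk : 1 ≤ k) (hp : 3 * k ≤ p) :
    roConst F k (2 * k) ≤ Real.sqrt 2 * ripConst F (2 * k) ∧
    (ripConst F (2 * k) < Real.sqrt 2 - 1 →
      ripConst F (2 * k) + roConst F k (2 * k) < 1) := by
  have hk2 : 1 ≤ 2 * k := by omega
  have hp1 : 1 ≤ p := by omega
  have hmem := ripConst_mem F (k := 2 * k) hk2 hp1
  set δ := ripConst F (2 * k) with hδdef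
  have hδ0 : 0 ≤ δ := RIPSet_nonneg F hk2 hp1 hmem
  have hkey := key_estimate F hmem hδ0
  have hbdd : BddBelow {θ : ℝ | ∀ c c' : Fin p → ℝ, IsSparse k c → IsSparse (2*k) c' →
      (∀ i, c i = 0 ∨ c' i = 0) →
      |∑ i, F.mulVec c i * F.mulVec c' i| ≤ θ * (l2norm c * l2norm c')} := by
    refine ⟨0, fun θ hθ => ?_⟩
    have h0p : 0 < p := by omega
    have h1p : 1 < p := by omega
    have hne : (⟨0, h0p⟩ : Fin p) ≠ ⟨1, h1p⟩ := by simp [Fin.ext_iff]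
    have h := hθ (fun i => if i = (⟨0, h0p⟩ : Fin p) then 1 else 0)
      (fun i => if i = (⟨1, h1p⟩ : Fin p) then 1 else 0)
      (sparse_basis _ hk) (sparse_basis _ hk2)
      (fun i => by
        by_cases h0 : i = (⟨0, h0p⟩ : Fin p)
        · exact Or.inr (by simp [h0, hne])
        · exact Or.inl (by simp [h0]))
    simp only [l2_basis, mul_one] at h
    exact le_trans (abs_nonneg _) h
  have hmain : roConst F k (2 * k) ≤ Real.sqrt 2 * δ := csInf_le hbdd hkey
  refine ⟨hmain, fun hlt => ?_⟩
  have hs2 : Real.sqrt 2 ^ 2 = 2 := Real.sq_sqrt (by norm_num)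
  have hs2n : 0 ≤ Real.sqrt 2 := Real.sqrt_nonneg 2
  nlinarith [hmain, hδ0, mul_lt_mul_of_pos_left hlt
    (show (0:ℝ) < 1 + Real.sqrt 2 by nlinarith)]
end
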